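/- arXiv:2501.16862 — 5 statements merged into one kernel-verified Lean document; each statement's English description precedes it below -/
import Mathlib

section
/- For every r > 0 and every real x ≠ 0, if α(x) = r/x + i·x, then |α(x) · sinh(α(x))| ≥ r. -/
/-!
For `z = a + b i` one has `‖sinh z‖² = sinh² a + sin² b ≥ sinh² a ≥ a²` and `‖z‖ ≥ |b|`, so
`‖z sinh z‖ ≥ |a b|`. For `α = r/x + x i` the product `a b` is `r`.
-/

namespace Complex

theorem sinh_eq_re_add_im (z : ℂ) :
    sinh z = (Real.sinh z.re * Real.cos z.im : ℝ) + (Real.cosh z.re * Real.sin z.im : ℝ) * I := by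
  conv_lhs => rw [← re_add_im z]
  rw [sinh_add, sinh_mul_I, cosh_mul_I]
  push_cast
  ring

theorem sq_norm_sinh (z : ℂ) : ‖sinh z‖ ^ 2 = Real.sinh z.re ^ 2 + Real.sin z.im ^ 2 := by
  rw [sinh_eq_re_add_im, Complex.sq_norm, normSq_add_mul_I]
  nlinarith [Real.sin_sq_add_cos_sq z.im, Real.cosh_sq z.re]

theorem abs_sinh_re_le_norm_sinh (z : ℂ) : |Real.sinh z.re| ≤ ‖sinh z‖ := by
  have h : Real.sinh z.re ^ 2 ≤ ‖sinh z‖ ^ 2 := by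
    rw [sq_norm_sinh]; exact le_add_of_nonneg_right (sq_nonneg _)
  simpa using sq_le_sq.1 h

theorem abs_im_mul_re_le_norm_mul_sinh (z : ℂ) : |z.im * z.re| ≤ ‖z * sinh z‖ := by
  rw [abs_mul, norm_mul]
  have hre : |z.re| ≤ |Real.sinh z.re| := by
    rw [Real.abs_sinh]; exact Real.self_le_sinh_iff.2 (abs_nonneg _)
  exact mul_le_mul (abs_im_le_norm z) (hre.trans (abs_sinh_re_le_norm_sinh z))
    (abs_nonneg _) (norm_nonneg _)

end Complex

theorem stmt_0_general (r x : ℝ) (hx : x ≠ 0) :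
    r ≤ ‖((r : ℂ) / x + Complex.I * x) *
      Complex.sinh ((r : ℂ) / x + Complex.I * x)‖ := by
  set z : ℂ := (r : ℂ) / x + Complex.I * x
  have hre : z.re = r / x := by simp [z, Complex.div_ofReal_re]
  have him : z.im = x := by simp [z]
  calc r ≤ |r| := le_abs_self r
    _ = |z.im * z.re| := by rw [hre, him, mul_div_cancel₀ r hx]
    _ ≤ _ := Complex.abs_im_mul_re_le_norm_mul_sinh z

/-- For every `r > 0` and every real `x ≠ 0`, with `α = r/x + i·x`,
we have `|α · sinh α| ≥ r`. -/
theorem stmt_0 (r x : ℝ) (hr : 0 < r) (hx : x ≠ 0) :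
    r ≤ ‖((r : ℂ) / x + Complex.I * x) *
      Complex.sinh ((r : ℂ) / x + Complex.I * x)‖ :=
  stmt_0_general r x hx
end

section
/- Let P₂ and H be n×n complex matrices with P₂ skew-adjoint (P₂* = −P₂) and invertible, and H self-adjoint and positive definite. Then P₂·H is diagonalizable: there exists an invertible matrix Q and a diagonal matrix Δ with P₂·H = Q⁻¹·Δ·Q. -/
/-!
Factor `H = B⋆ B` with `B` invertible. Then `P₂ H = B⁻¹ (B P₂ B⋆) B`, and `B P₂ B⋆` is again
skew-adjoint, so `I • (B P₂ B⋆)` is Hermitian and the spectral theorem diagonalizes it by a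
unitary `U`. Hence `Q = U⋆ B` conjugates `P₂ H` to a diagonal matrix.
-/

open Matrix
open scoped ComplexOrder

namespace Matrix

variable {n : Type*} [Fintype n] [DecidableEq n]

theorem exists_unitary_diagonal_of_mem_skewAdjoint {A : Matrix n n ℂ}
    (hA : A ∈ skewAdjoint (Matrix n n ℂ)) :
    ∃ U ∈ unitaryGroup n ℂ, ∃ d : n → ℂ, A = U * diagonal d * star U := by
  have hIA : (Complex.I • A).IsHermitian := by
    rw [IsHermitian, conjTranspose_smul, ← star_eq_conjTranspose, skewAdjoint.mem_iff.mp hA,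
      Complex.star_def, Complex.conj_I, neg_smul, smul_neg, neg_neg]
  refine ⟨hIA.eigenvectorUnitary, SetLike.coe_mem _,
    -Complex.I • (RCLike.ofReal ∘ hIA.eigenvalues), ?_⟩
  have hspec := hIA.spectral_theorem
  rw [Unitary.conjStarAlgAut_apply] at hspec
  rw [diagonal_smul, Matrix.mul_smul, Matrix.smul_mul, ← hspec, smul_smul]
  simp

open scoped MatrixOrder in
theorem PosDef.exists_isUnit_eq_star_mul_self {H : Matrix n n ℂ} (hH : H.PosDef) :
    ∃ B, IsUnit B ∧ H = star B * B :=
  CStarAlgebra.isStrictlyPositive_iff_eq_star_mul_self.mp hH.isStrictlyPositive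

theorem exists_isDiag_similar_mul_of_mem_skewAdjoint_of_posDef {P H : Matrix n n ℂ}
    (hP : P ∈ skewAdjoint (Matrix n n ℂ)) (hH : H.PosDef) :
    ∃ Q Δ : Matrix n n ℂ, IsUnit Q ∧ Δ.IsDiag ∧ P * H = Q⁻¹ * Δ * Q := by
  obtain ⟨B, hB, rfl⟩ := hH.exists_isUnit_eq_star_mul_self
  obtain ⟨U, hU, d, hd⟩ := exists_unitary_diagonal_of_mem_skewAdjoint (skewAdjoint.conjugate hP B)
  have hUB : IsUnit (star U * B) := (Unitary.toUnits ⟨U, hU⟩).isUnit.star.mul hB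
  refine ⟨star U * B, diagonal d, hUB, isDiag_diagonal d, ?_⟩
  have hBinv : B⁻¹ * B = 1 := nonsing_inv_mul B ((isUnit_iff_isUnit_det B).mp hB)
  have hUinv : (star U)⁻¹ = U := inv_eq_left_inv (mem_unitaryGroup_iff.mp hU)
  calc P * (star B * B) = B⁻¹ * (B * P * star B) * B := by
        simp only [← mul_assoc, hBinv, one_mul]
    _ = (star U * B)⁻¹ * diagonal d * (star U * B) := by
        rw [hd, mul_inv_rev, hUinv]; simp only [mul_assoc]

end Matrix

theorem stmt_5_general {n : ℕ} (P₂ H : Matrix (Fin n) (Fin n) ℂ)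
    (hskew : P₂ᴴ = -P₂) (hH : H.PosDef) :
    ∃ Q Δ : Matrix (Fin n) (Fin n) ℂ,
      IsUnit Q ∧ Δ.IsDiag ∧ P₂ * H = Q⁻¹ * Δ * Q :=
  exists_isDiag_similar_mul_of_mem_skewAdjoint_of_posDef (skewAdjoint.mem_iff.mpr hskew) hH

/-- If `P₂` is skew-adjoint and invertible and `H` is self-adjoint positive
definite, then `P₂ H` is diagonalizable: `P₂ H = Q⁻¹ Δ Q` with `Q` invertible
and `Δ` diagonal. -/
theorem stmt_5 {n : ℕ} (P₂ H : Matrix (Fin n) (Fin n) ℂ)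
    (hskew : P₂ᴴ = -P₂) (hP₂ : IsUnit P₂) (hH : H.PosDef) :
    ∃ Q Δ : Matrix (Fin n) (Fin n) ℂ,
      IsUnit Q ∧ Δ.IsDiag ∧ P₂ * H = Q⁻¹ * Δ * Q :=
  stmt_5_general P₂ H hskew hH
end

section
/- Fix μ ∈ ℝ \ {0}, a < b, s ∈ ℂ with Re s > 0, γ ∈ ℂ with γ² = −is/μ, Re γ > 0, sinh(γ(b−a)) ≠ 0. Define the 2×2 matrix G(s) = (i/γ)·[[−coth(γ(b−a)), 1/sinh(γ(b−a))], [1/sinh(γ(b−a)), −coth(γ(b−a))]]. If x₀(ξ) = α e^{γξ} + β e^{−γξ} satisfies s x₀ = iμ x₀'' and (iμ x₀'(b), iμ x₀'(a)) = u₀, then (μ x₀(b), −μ x₀(a)) = G(s) u₀. -/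
open Complex

/-!
Writing `x(ξ) = α e^{γξ} + β e^{−γξ}` and `y(ξ) = α e^{γξ} − β e^{−γξ}`, we have `x' = γ y`, so the
inputs are `u₁ = iμγ y(b)`, `u₂ = iμγ y(a)`. The addition formulas for `cosh` and `sinh` give,
with `w = γ(b − a)`,
`sinh w · x(b) = cosh w · y(b) − y(a)` and `sinh w · x(a) = y(b) − cosh w · y(a)`,
and dividing by `sinh w` is exactly multiplication by `G(s)` once `(i/γ)·iμγ = −μ` is used.
-/

lemma hasDerivAt_cexp_const_mul_ofReal (γ : ℂ) (ξ : ℝ) :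
    HasDerivAt (fun t : ℝ => exp (γ * t)) (γ * exp (γ * ξ)) ξ := by
  have h := ((hasDerivAt_id (ξ : ℂ)).const_mul γ).cexp
  simp only [id, mul_one] at h
  rw [mul_comm]
  exact h.comp_ofReal

lemma deriv_exp_add_exp_neg (α β γ : ℂ) (ξ : ℝ) :
    deriv (fun t : ℝ => α * exp (γ * t) + β * exp (-γ * t)) ξ
      = γ * (α * exp (γ * ξ) - β * exp (-γ * ξ)) := by
  have h := ((hasDerivAt_cexp_const_mul_ofReal γ ξ).const_mul α).add
    ((hasDerivAt_cexp_const_mul_ofReal (-γ) ξ).const_mul β)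
  exact h.deriv.trans (by ring)

section ExpCombination

variable (α β γ p q : ℂ)

lemma sinh_mul_exp_add_exp_neg_right :
    sinh (γ * (q - p)) * (α * exp (γ * q) + β * exp (-γ * q))
      = cosh (γ * (q - p)) * (α * exp (γ * q) - β * exp (-γ * q))
        - (α * exp (γ * p) - β * exp (-γ * p)) := by
  have hq : exp (γ * q) = exp (γ * p) * exp (γ * (q - p)) := by rw [← exp_add]; ring_nf
  simp only [neg_mul, exp_neg]
  rw [hq, sinh, cosh, exp_neg]
  field_simp [exp_ne_zero]
  ring

lemma sinh_mul_exp_add_exp_neg_left :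
    sinh (γ * (q - p)) * (α * exp (γ * p) + β * exp (-γ * p))
      = (α * exp (γ * q) - β * exp (-γ * q))
        - cosh (γ * (q - p)) * (α * exp (γ * p) - β * exp (-γ * p)) := by
  have hq : exp (γ * q) = exp (γ * p) * exp (γ * (q - p)) := by rw [← exp_add]; ring_nf
  simp only [neg_mul, exp_neg]
  rw [hq, sinh, cosh, exp_neg]
  field_simp [exp_ne_zero]
  ring

end ExpCombination

theorem stmt_12_general (μ : ℝ) (a b : ℝ)
    (γ : ℂ) (hsinh : Complex.sinh (γ * (b - a)) ≠ 0)
    (u₁ u₂ α β : ℂ) (x₀ : ℝ → ℂ)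
    (hx : x₀ = fun ξ : ℝ => α * Complex.exp (γ * ξ) + β * Complex.exp (-γ * ξ))
    (hu₁ : Complex.I * μ * deriv x₀ b = u₁)
    (hu₂ : Complex.I * μ * deriv x₀ a = u₂) :
    (μ : ℂ) * x₀ b = Complex.I / γ *
        (-(Complex.cosh (γ * (b - a)) / Complex.sinh (γ * (b - a))) * u₁
          + (Complex.sinh (γ * (b - a)))⁻¹ * u₂) ∧
    -(μ : ℂ) * x₀ a = Complex.I / γ *
        ((Complex.sinh (γ * (b - a)))⁻¹ * u₁
          - Complex.cosh (γ * (b - a)) / Complex.sinh (γ * (b - a)) * u₂) := by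
  have hγ : γ ≠ 0 := by
    rintro rfl
    simp at hsinh
  subst hx hu₁ hu₂
  rw [deriv_exp_add_exp_neg, deriv_exp_add_exp_neg]
  beta_reduce
  have hright := sinh_mul_exp_add_exp_neg_right α β γ a b
  have hleft := sinh_mul_exp_add_exp_neg_left α β γ a b
  -- keep `field_simp` from rewriting inside the boundary values
  generalize α * exp (γ * a) - β * exp (-γ * a) = ya at hright hleft ⊢
  generalize α * exp (γ * b) - β * exp (-γ * b) = yb at hright hleft ⊢
  generalize α * exp (γ * a) + β * exp (-γ * a) = xa at hleft ⊢
  generalize α * exp (γ * b) + β * exp (-γ * b) = xb at hright ⊢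
  constructor
  · field_simp
    linear_combination (μ : ℂ) * hright - μ * (ya - cosh (γ * (b - a)) * yb) * I_sq
  · field_simp
    linear_combination -(μ : ℂ) * hleft - μ * (yb - cosh (γ * (b - a)) * ya) * I_sq

/-- If `x₀(ξ) = α e^{γξ} + β e^{−γξ}` satisfies `s x₀ = iμ x₀''` and
`(iμ x₀'(b), iμ x₀'(a)) = (u₁,u₂)`, then `(μ x₀(b), −μ x₀(a)) = G(s)(u₁,u₂)`,
where `G(s) = (i/γ)·[[−coth(γ(b−a)), 1/sinh(γ(b−a))],
[1/sinh(γ(b−a)), −coth(γ(b−a))]]`. -/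
theorem stmt_12 (μ : ℝ) (hμ : μ ≠ 0) (a b : ℝ) (hab : a < b)
    (s : ℂ) (hs : 0 < s.re) (γ : ℂ) (hγ : γ ^ 2 = -Complex.I * s / μ)
    (hγre : 0 < γ.re) (hsinh : Complex.sinh (γ * (b - a)) ≠ 0)
    (u₁ u₂ α β : ℂ) (x₀ : ℝ → ℂ)
    (hx : x₀ = fun ξ : ℝ => α * Complex.exp (γ * ξ) + β * Complex.exp (-γ * ξ))
    (hode : ∀ ξ : ℝ, s * x₀ ξ = Complex.I * μ * deriv (deriv x₀) ξ)
    (hu₁ : Complex.I * μ * deriv x₀ b = u₁)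
    (hu₂ : Complex.I * μ * deriv x₀ a = u₂) :
    (μ : ℂ) * x₀ b = Complex.I / γ *
        (-(Complex.cosh (γ * (b - a)) / Complex.sinh (γ * (b - a))) * u₁
          + (Complex.sinh (γ * (b - a)))⁻¹ * u₂) ∧
    -(μ : ℂ) * x₀ a = Complex.I / γ *
        ((Complex.sinh (γ * (b - a)))⁻¹ * u₁
          - Complex.cosh (γ * (b - a)) / Complex.sinh (γ * (b - a)) * u₂) :=
  stmt_12_general μ a b γ hsinh u₁ u₂ α β x₀ hx hu₁ hu₂
end

section
/- Fix μ ∈ ℝ \ {0} and L > 0. For s ∈ ℂ with Re s > 0 let γ(s) be the square root of −is/μ with positive real part and define G(s) = (i/γ(s))·[[−coth(γ(s)L), 1/sinh(γ(s)L)], [1/sinh(γ(s)L), −coth(γ(s)L)]] (whenever sinh(γ(s)L) ≠ 0). Then the entries of G(s) tend to 0 as Re s → ∞: for every ε > 0 there is R such that Re s > R implies each entry of G(s) has absolute value at most ε. -/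
/-!
Put `z = γ L`. Since `γ² = -i s / μ`, `2 Re z Im z = Im z² = -L² Re s / μ`, while `|Re z| ≤ |sinh z|`
and `|Im z| ≤ |z| = |γ| L`. Hence `|γ| |sinh (γ L)| ≥ L Re s / (2 |μ|)`, which bounds the off-diagonal
entry. As `|cosh| ≤ 1 + |sinh|`, the diagonal entry exceeds that bound by at most
`1 / |γ| ≤ √(|μ| / Re s)`.
-/

open Complex Filter Topology

namespace Complex

theorem abs_re_le_norm_sinh (z : ℂ) : |z.re| ≤ ‖sinh z‖ := by
  have h : 2 * |Real.sinh z.re| ≤ 2 * ‖sinh z‖ :=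
    calc 2 * |Real.sinh z.re| = |‖exp z‖ - ‖exp (-z)‖| := by
          rw [norm_exp, norm_exp, neg_re, Real.sinh_eq, abs_div, abs_two]; ring
      _ ≤ ‖exp z - exp (-z)‖ := abs_norm_sub_norm_le _ _
      _ = 2 * ‖sinh z‖ := by rw [sinh, norm_div, Complex.norm_two]; ring
  calc |z.re| ≤ Real.sinh |z.re| := Real.self_le_sinh_iff.mpr (abs_nonneg _)
    _ = |Real.sinh z.re| := (Real.abs_sinh _).symm
    _ ≤ ‖sinh z‖ := by linarith

theorem norm_cosh_le_one_add_norm_sinh (z : ℂ) : ‖cosh z‖ ≤ 1 + ‖sinh z‖ := by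
  refine le_of_sq_le_sq ?_ (by positivity)
  calc ‖cosh z‖ ^ 2 = ‖1 + sinh z ^ 2‖ := by rw [← norm_pow, cosh_sq, add_comm]
    _ ≤ 1 + ‖sinh z‖ ^ 2 := (norm_add_le _ _).trans_eq (by rw [norm_one, norm_pow])
    _ ≤ (1 + ‖sinh z‖) ^ 2 := by nlinarith [norm_nonneg (sinh z)]

theorem abs_im_sq_le_two_mul_norm_mul_norm_sinh (z : ℂ) :
    |(z ^ 2).im| ≤ 2 * ‖z‖ * ‖sinh z‖ := by
  rw [sq, mul_im, mul_comm z.im, ← two_mul, abs_mul, abs_two, mul_assoc, abs_mul, mul_comm ‖z‖]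
  gcongr
  · exact abs_re_le_norm_sinh z
  · exact abs_im_le_norm z

theorem norm_mul_cosh_div_sinh_le (a z : ℂ) :
    ‖a * (cosh z / sinh z)‖ ≤ ‖a * (sinh z)⁻¹‖ + ‖a‖ := by
  have hcosh := norm_cosh_le_one_add_norm_sinh z
  calc ‖a * (cosh z / sinh z)‖ = ‖a‖ * ‖sinh z‖⁻¹ * ‖cosh z‖ := by
        rw [div_eq_inv_mul, ← mul_assoc, norm_mul, norm_mul, norm_inv]
    _ ≤ ‖a‖ * ‖sinh z‖⁻¹ * (1 + ‖sinh z‖) := by gcongr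
    _ = ‖a‖ * ‖sinh z‖⁻¹ + ‖a‖ * (‖sinh z‖⁻¹ * ‖sinh z‖) := by ring
    _ ≤ ‖a * (sinh z)⁻¹‖ + ‖a‖ := by
        rw [norm_mul, norm_inv]
        gcongr
        exact mul_le_of_le_one_right (norm_nonneg a) inv_mul_le_one

section SquareRootOfMinusIS

variable {μ L : ℝ} {s g : ℂ}

theorem norm_sq_eq_of_sq_eq (hg : g ^ 2 = -I * s / μ) : ‖g‖ ^ 2 = ‖s‖ / |μ| := by
  rw [← norm_pow, hg, norm_div, norm_mul, norm_neg, norm_I, one_mul, norm_real,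
    Real.norm_eq_abs]

theorem inv_norm_le_sqrt_of_sq_eq (hg : g ^ 2 = -I * s / μ) (hs : 0 < s.re) :
    ‖g‖⁻¹ ≤ √(|μ| / s.re) :=
  calc ‖g‖⁻¹ = √((‖g‖ ^ 2)⁻¹) := by rw [Real.sqrt_inv, Real.sqrt_sq (norm_nonneg _)]
    _ = √(|μ| / ‖s‖) := by rw [norm_sq_eq_of_sq_eq hg, inv_div]
    _ ≤ √(|μ| / s.re) :=
        Real.sqrt_le_sqrt (div_le_div_of_nonneg_left (abs_nonneg _) hs (re_le_norm s))

theorem abs_re_mul_le_norm_mul_norm_sinh_of_sq_eq (hμ : μ ≠ 0) (hL : 0 < L)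
    (hg : g ^ 2 = -I * s / μ) :
    |s.re| * L ≤ 2 * |μ| * ‖g‖ * ‖sinh (g * L)‖ := by
  have him : ((g * L) ^ 2).im = L ^ 2 / μ * -s.re := by
    rw [mul_pow, hg, show -I * s / μ * (L : ℂ) ^ 2 = ((L ^ 2 / μ : ℝ) : ℂ) * (-I * s) by
      push_cast; ring, im_ofReal_mul]
    simp
  have key := abs_im_sq_le_two_mul_norm_mul_norm_sinh (g * L)
  rw [him, norm_mul, norm_real, Real.norm_eq_abs, abs_of_pos hL, abs_mul, abs_div, abs_neg,
    abs_of_pos (pow_pos hL 2), div_mul_eq_mul_div, div_le_iff₀ (abs_pos.2 hμ)] at key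
  exact le_of_mul_le_mul_left (by linear_combination key) hL

theorem norm_I_div_mul_inv_sinh_le (hμ : μ ≠ 0) (hL : 0 < L) (hs : 0 < s.re)
    (hg : g ^ 2 = -I * s / μ) :
    ‖I / g * (sinh (g * L))⁻¹‖ ≤ 2 * |μ| / (L * s.re) := by
  have h := abs_re_mul_le_norm_mul_norm_sinh_of_sq_eq hμ hL hg
  rw [abs_of_pos hs] at h
  have hpos : 0 < ‖g‖ * ‖sinh (g * L)‖ := by
    by_contra! hle
    nlinarith [abs_pos.2 hμ, mul_pos hs hL]
  rw [norm_mul, norm_div, norm_I, norm_inv, one_div, ← mul_inv, inv_le_comm₀ hpos (by positivity),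
    inv_div, div_le_iff₀ (by positivity)]
  linarith

end SquareRootOfMinusIS

end Complex

/-- The entries of the transfer function
`G(s) = (i/γ(s))·[[−coth(γ(s)L), 1/sinh(γ(s)L)], [1/sinh(γ(s)L), −coth(γ(s)L)]]`
tend to `0` as `Re s → ∞`, where `γ(s)` is the square root of `−is/μ` with
positive real part. -/
theorem stmt_16 (μ : ℝ) (hμ : μ ≠ 0) (L : ℝ) (hL : 0 < L)
    (γ : ℂ → ℂ)
    (hγ : ∀ s : ℂ, 0 < s.re → (γ s) ^ 2 = -Complex.I * s / μ ∧ 0 < (γ s).re) :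
    ∀ ε > (0 : ℝ), ∃ R > (0 : ℝ), ∀ s : ℂ, R < s.re →
      Complex.sinh (γ s * L) ≠ 0 →
        ‖Complex.I / γ s *
            (Complex.cosh (γ s * L) / Complex.sinh (γ s * L))‖ ≤ ε ∧
        ‖Complex.I / γ s * (Complex.sinh (γ s * L))⁻¹‖ ≤ ε := by
  intro ε hε
  have hbound : Tendsto (fun r : ℝ => 2 * |μ| / (L * r) + √(|μ| / r)) atTop (𝓝 0) := by
    have h1 : Tendsto (fun r : ℝ => 2 * |μ| / (L * r)) atTop (𝓝 0) :=
      tendsto_const_nhds.div_atTop (tendsto_id.const_mul_atTop hL)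
    have h2 : Tendsto (fun r : ℝ => √(|μ| / r)) atTop (𝓝 0) := by
      simpa only [id, Real.sqrt_zero] using
        ((tendsto_const_nhds (x := |μ|)).div_atTop tendsto_id).sqrt
    simpa using h1.add h2
  obtain ⟨R, hR⟩ := eventually_atTop.1
    ((eventually_gt_atTop 0).and (hbound.eventually (ge_mem_nhds hε)))
  refine ⟨max R 1, by positivity, fun s hs _ => ?_⟩
  obtain ⟨hs_pos, hs_le⟩ := hR s.re ((le_max_left _ _).trans hs.le)
  have hg := (hγ s hs_pos).1
  have hsinh := norm_I_div_mul_inv_sinh_le hμ hL hs_pos hg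
  refine ⟨?_, hsinh.trans ((le_add_of_nonneg_right (Real.sqrt_nonneg _)).trans hs_le)⟩
  calc _ ≤ ‖I / γ s * (sinh (γ s * L))⁻¹‖ + ‖I / γ s‖ := norm_mul_cosh_div_sinh_le _ _
    _ ≤ 2 * |μ| / (L * s.re) + √(|μ| / s.re) := by
        gcongr
        rw [norm_div, norm_I, one_div]
        exact inv_norm_le_sqrt_of_sq_eq hg hs_pos
    _ ≤ ε := hs_le
end

section
/- Let B₁, C₁ be m×m complex matrices and suppose there exist matrices B₂, C₂ such that the 2m×2m block matrix [[B₁, B₂],[C₁, C₂]] is invertible. If a sequence of m×m matrices Gₖ satisfies ‖Gₖ‖ ≤ M for all k, Eₖ → 0, and Gₖ·(B₁ + B₂·Eₖ) = C₁ + C₂·Eₖ for all k, then ker B₁ = {0}, i.e., B₁ is invertible. -/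
/-!
Suppose `B₁ v = 0`. Applying the identity `Gₖ (B₁ + B₂ Eₖ) = C₁ + C₂ Eₖ` to `v` gives
`Gₖ B₂ (Eₖ v) = C₁ v + C₂ (Eₖ v)`. As `Eₖ v → 0` and the `Gₖ` are bounded, the left side tends
to `0` and the right side to `C₁ v`, so `C₁ v = 0`. Then `(v, 0)` lies in the kernel of the
invertible block matrix, hence `v = 0`.
-/

open Filter Matrix Topology

namespace Matrix

theorem tendsto_mulVec_zero_of_bounded {α ι κ R : Type*} [Fintype κ] [NonUnitalSeminormedRing R]
    {l : Filter α} {G : α → Matrix ι κ R} {x : α → κ → R} {M : ℝ}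
    (hG : ∀ a i j, ‖G a i j‖ ≤ M) (hx : Tendsto x l (𝓝 0)) :
    Tendsto (fun a => G a *ᵥ x a) l (𝓝 0) := by
  refine tendsto_pi_nhds.2 fun i => ?_
  simpa [mulVec, dotProduct] using tendsto_finsetSum Finset.univ fun j _ =>
    isBoundedUnder_le_mul_tendsto_zero (isBoundedUnder_of ⟨M, fun a => hG a i j⟩)
      (tendsto_pi_nhds.1 hx j)

theorem eq_zero_of_isUnit_fromBlocks {ι κ R : Type*} [Fintype ι] [Fintype κ] [DecidableEq ι]
    [DecidableEq κ] [CommRing R] {A : Matrix ι ι R} {B : Matrix ι κ R} {C : Matrix κ ι R}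
    {D : Matrix κ κ R} (h : IsUnit (fromBlocks A B C D)) {v : ι → R} (hA : A *ᵥ v = 0)
    (hC : C *ᵥ v = 0) : v = 0 := by
  have hker : fromBlocks A B C D *ᵥ Sum.elim v 0 = fromBlocks A B C D *ᵥ 0 := by
    simp [fromBlocks_mulVec, hA, hC]
  have hv0 : Sum.elim v (0 : κ → R) = 0 := mulVec_injective_of_isUnit h hker
  exact funext fun i => by simpa using congrFun hv0 (Sum.inl i)

end Matrix

/-- If the block matrix `[[B₁,B₂],[C₁,C₂]]` is invertible and there are
matrices `Gₖ`, uniformly bounded (entrywise), and `Eₖ → 0` with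
`Gₖ (B₁ + B₂ Eₖ) = C₁ + C₂ Eₖ` for all `k`, then `B₁` is invertible. -/
theorem stmt_18 {m : ℕ} (B₁ B₂ C₁ C₂ : Matrix (Fin m) (Fin m) ℂ)
    (hblock : IsUnit (Matrix.fromBlocks B₁ B₂ C₁ C₂))
    (G E : ℕ → Matrix (Fin m) (Fin m) ℂ) (M : ℝ)
    (hG : ∀ k i j, ‖G k i j‖ ≤ M)
    (hE : Filter.Tendsto E Filter.atTop (nhds 0))
    (heq : ∀ k, G k * (B₁ + B₂ * E k) = C₁ + C₂ * E k) :
    IsUnit B₁ := by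
  rw [isUnit_iff_isUnit_det, isUnit_iff_ne_zero]
  intro hdet
  obtain ⟨v, hv, hB₁v⟩ := exists_mulVec_eq_zero_iff.mpr hdet
  have hmulVec_right : ∀ (A : Matrix (Fin m) (Fin m) ℂ) {x : ℕ → Fin m → ℂ},
      Tendsto x atTop (𝓝 0) → Tendsto (fun k => A *ᵥ x k) atTop (𝓝 0) := fun A _ hx =>
    ((continuous_const.matrix_mulVec continuous_id).tendsto' 0 0 (mulVec_zero A)).comp hx
  have hEv : Tendsto (fun k => E k *ᵥ v) atTop (𝓝 0) :=
    ((continuous_id.matrix_mulVec continuous_const).tendsto' 0 0 (zero_mulVec v)).comp hE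
  have hid : ∀ k, G k *ᵥ (B₂ *ᵥ (E k *ᵥ v)) = C₁ *ᵥ v + C₂ *ᵥ (E k *ᵥ v) := fun k => by
    simpa [mul_add, add_mulVec, ← mulVec_mulVec, hB₁v] using congrArg (· *ᵥ v) (heq k)
  have hlhs : Tendsto (fun k => G k *ᵥ (B₂ *ᵥ (E k *ᵥ v))) atTop (𝓝 0) :=
    tendsto_mulVec_zero_of_bounded hG (hmulVec_right B₂ hEv)
  have hrhs : Tendsto (fun k => G k *ᵥ (B₂ *ᵥ (E k *ᵥ v))) atTop (𝓝 (C₁ *ᵥ v)) := by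
    simpa using ((hmulVec_right C₂ hEv).const_add (C₁ *ᵥ v)).congr fun k => (hid k).symm
  exact hv (eq_zero_of_isUnit_fromBlocks hblock hB₁v (tendsto_nhds_unique hrhs hlhs))
end
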